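/- There exists a generic binary-choice bidding game (the game G_two) with equal initial budgets (1/2, 1/2) admitting two pure subgame-perfect equilibria with different outcomes: one with root bids (0,0) leading to the leaf with payoffs (5,5), and one with root bids (1/2, 1/2) leading to the leaf with payoffs (2,2). -/
import Mathlib


/-- A game tree for two-player bidding games: leaves carry utilities for both players. -/
inductive GTree where
  | leaf : ℝ → ℝ → GTree
  | node : List GTree → GTree

namespace GTree

/-- Height of a game tree. -/
def height : GTree → ℕ
  | .leaf _ _ => 0
  | .node [] => 1
  | .node (c :: cs) => max (1 + height c) (height (.node cs))

/-- The list of leaf payoff pairs of a game tree. -/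
def leaves : GTree → List (ℝ × ℝ)
  | .leaf a b => [(a, b)]
  | .node [] => []
  | .node (c :: cs) => leaves c ++ leaves (.node cs)

/-- Subtree relation. -/
inductive Subtree : GTree → GTree → Prop
  | refl (s : GTree) : Subtree s s
  | step {s c : GTree} {cs : List GTree} : c ∈ cs → Subtree s c → Subtree s (.node cs)

/-- A (Markov) strategy profile: at each subgame and budget of player 1, it gives
the bids `(b1, b2)` of the two players and the indices of the children each player
would move to upon winning the round. -/
abbrev Profile := GTree → ℝ → ℝ × ℝ × ℕ × ℕ

/-- Play with explicit fuel (the height of the tree suffices). The higher bidder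
(ties to player 1) pays her bid to the other player and moves to her chosen child. -/
noncomputable def playAux (γ : Profile) : ℕ → GTree → ℝ → ℝ × ℝ
  | _, .leaf u1 u2, _ => (u1, u2)
  | 0, .node _, _ => (0, 0)
  | n + 1, .node cs, B1 =>
      let a := γ (.node cs) B1
      if a.2.1 ≤ a.1 then
        playAux γ n (cs.getD a.2.2.1 (.leaf 0 0)) (B1 - a.1)
      else
        playAux γ n (cs.getD a.2.2.2 (.leaf 0 0)) (B1 + a.2.1)

/-- The outcome (pair of utilities at the reached leaf) from playing `γ` in `G`
with initial budget `B1` for player 1 (player 2 has `1 - B1`). -/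
noncomputable def outcome (γ : Profile) (G : GTree) (B1 : ℝ) : ℝ × ℝ :=
  playAux γ (height G) G B1

/-- Validity of an action tuple at a node with children `cs` under budget `B1`. -/
def validAct (cs : List GTree) (B1 : ℝ) (a : ℝ × ℝ × ℕ × ℕ) : Prop :=
  0 ≤ a.1 ∧ a.1 ≤ B1 ∧ 0 ≤ a.2.1 ∧ a.2.1 ≤ 1 - B1 ∧
  a.2.2.1 < cs.length ∧ a.2.2.2 < cs.length

/-- Equilibrium conditions for an action tuple `a` at a node with children `cs`,
budget `B1` of player 1, given that play in all subgames follows `γ`: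
each player's designated move is optimal for her; the winner cannot gain by
winning with a different bid (and any move) nor by dropping the round; the loser
cannot gain by overbidding (with any move). -/
def eqAct (γ : Profile) (cs : List GTree) (B1 : ℝ) (a : ℝ × ℝ × ℕ × ℕ) : Prop :=
  let b1 := a.1
  let b2 := a.2.1
  let c1 := cs.getD a.2.2.1 (.leaf 0 0)
  let c2 := cs.getD a.2.2.2 (.leaf 0 0)
  (∀ c ∈ cs, (outcome γ c (B1 - b1)).1 ≤ (outcome γ c1 (B1 - b1)).1) ∧
  (∀ c ∈ cs, (outcome γ c (B1 + b2)).2 ≤ (outcome γ c2 (B1 + b2)).2) ∧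
  (if b2 ≤ b1 then
    (∀ b1', 0 ≤ b1' → b1' ≤ B1 → b2 ≤ b1' → ∀ c ∈ cs,
        (outcome γ c (B1 - b1')).1 ≤ (outcome γ c1 (B1 - b1)).1) ∧
    (0 < b2 → (outcome γ c2 (B1 + b2)).1 ≤ (outcome γ c1 (B1 - b1)).1) ∧
    (∀ b2', b2' ≤ 1 - B1 → b1 < b2' → ∀ c ∈ cs,
        (outcome γ c (B1 + b2')).2 ≤ (outcome γ c1 (B1 - b1)).2)
  else
    (∀ b2', 0 ≤ b2' → b2' ≤ 1 - B1 → b1 < b2' → ∀ c ∈ cs,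
        (outcome γ c (B1 + b2')).2 ≤ (outcome γ c2 (B1 + b2)).2) ∧
    ((outcome γ c1 (B1 - b1)).2 ≤ (outcome γ c2 (B1 + b2)).2) ∧
    (∀ b1', 0 ≤ b1' → b1' ≤ B1 → b2 ≤ b1' → ∀ c ∈ cs,
        (outcome γ c (B1 - b1')).1 ≤ (outcome γ c2 (B1 + b2)).1))

/-- `γ` is a pure subgame-perfect equilibrium of `G`: at every subgame and every
budget partition, the prescribed actions are valid and no player has a profitable
unilateral (one-shot) deviation. -/
def IsPSPE (γ : Profile) (G : GTree) : Prop :=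
  ∀ cs, Subtree (.node cs) G → ∀ B1 : ℝ, 0 ≤ B1 → B1 ≤ 1 →
    validAct cs B1 (γ (.node cs) B1) ∧ eqAct γ cs B1 (γ (.node cs) B1)

/-- Every internal node has at least one child. -/
def WF (G : GTree) : Prop := ∀ cs, Subtree (.node cs) G → cs ≠ []

/-- Every internal node has exactly two children. -/
def IsBinary (G : GTree) : Prop := ∀ cs, Subtree (.node cs) G → cs.length = 2

end GTree

open GTree

/-- The game `G_two`: the root has children leaf `(2,2)` and node `x`; `x` has
children leaf `(5,5)` and node `y`; `y` has children leaves `(1,9)` and `(9,1)`.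
All payoff pairs are distinct in each coordinate (generic). -/
def Gtwo : GTree :=
  .node [.leaf 2 2, .node [.leaf 5 5, .node [.leaf 1 9, .leaf 9 1]]]


def Yt : GTree := .node [.leaf 1 9, .leaf 9 1]
def Xt : GTree := .node [.leaf 5 5, Yt]

noncomputable def yAct (B : ℝ) : ℝ × ℝ × ℕ × ℕ :=
  if B < 1/2 then (0, 1-B, 1, 0) else (1-B, 1-B, 1, 0)

noncomputable def xAct (B : ℝ) : ℝ × ℝ × ℕ × ℕ :=
  if B < 1/4 then (0, 1/4, 0, 1)
  else if B < 1/2 then (1/2 - B, 1 - B, 0, 0)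
  else if B < 3/4 then (1-B, 1-B, 0, 0)
  else (1-B, 1-B, 1, 0)

noncomputable def rAct (B : ℝ) : ℝ × ℝ × ℕ × ℕ :=
  if B < 1/8 then (0, 1/8, 0, 1)
  else if B < 1/4 then (1/4 - B, 1/4, 0, 1)
  else if B < 5/8 then (0, 0, 1, 1)
  else (1-B, 1-B, 1, 0)

noncomputable def yOut (B : ℝ) : ℝ × ℝ := if B < 1/2 then (1,9) else (9,1)
noncomputable def xOut (B : ℝ) : ℝ × ℝ :=
  if B < 1/4 then (1,9) else if B < 3/4 then (5,5) else (9,1)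

noncomputable def gam : Profile := fun t B =>
  match t with
  | .node [_, .node [_, .node _]] => rAct B
  | .node [_, .node _] => xAct B
  | .node [_, _] => yAct B
  | _ => (0,0,0,0)

noncomputable def gam' : Profile := fun t B =>
  match t with
  | .node [_, .node [_, .node _]] => if B = 1/2 then (1/2,1/2,0,0) else rAct B
  | .node [_, .node _] => xAct B
  | .node [_, _] => yAct B
  | _ => (0,0,0,0)

lemma gam_root (B : ℝ) : gam Gtwo B = rAct B := rfl
lemma gam_X (B : ℝ) : gam Xt B = xAct B := rfl
lemma gam_Y (B : ℝ) : gam Yt B = yAct B := rfl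
lemma gam'_root (B : ℝ) : gam' Gtwo B = if B = 1/2 then (1/2,1/2,0,0) else rAct B := rfl
lemma gam'_X (B : ℝ) : gam' Xt B = xAct B := rfl
lemma gam'_Y (B : ℝ) : gam' Yt B = yAct B := rfl

lemma no_sub_leaf {t : GTree} {a b : ℝ} (h : Subtree t (.leaf a b)) : t = .leaf a b := by
  cases h; rfl

lemma subtree_enum {cs : List GTree} (h : Subtree (.node cs) Gtwo) :
    cs = [.leaf 2 2, Xt] ∨ cs = [.leaf 5 5, Yt] ∨ cs = [.leaf 1 9, .leaf 9 1] := by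
  cases h with
  | refl => left; rfl
  | step hc hsub =>
    simp only [Gtwo, List.mem_cons, List.mem_singleton, List.not_mem_nil, or_false] at hc
    rcases hc with rfl | rfl
    · exact absurd (no_sub_leaf hsub) (by simp)
    · cases hsub with
      | refl => right; left; rfl
      | step hc2 hsub2 =>
        simp only [List.mem_cons, List.mem_singleton, List.not_mem_nil, or_false] at hc2
        rcases hc2 with rfl | rfl
        · exact absurd (no_sub_leaf hsub2) (by simp)
        · cases hsub2 with
          | refl => right; right; rfl
          | step hc3 hsub3 =>
            simp only [List.mem_cons, List.mem_singleton, List.not_mem_nil, or_false] at hc3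
            rcases hc3 with rfl | rfl
            · exact absurd (no_sub_leaf hsub3) (by simp)
            · exact absurd (no_sub_leaf hsub3) (by simp)

lemma outcome_leaf (γ : Profile) (a b B : ℝ) : outcome γ (.leaf a b) B = (a, b) := by
  simp [outcome, height, playAux]

lemma oY (γ : Profile) (hy : ∀ B, γ Yt B = yAct B) (B : ℝ) :
    outcome γ Yt B = yOut B := by
  have hh : height Yt = 1 := by norm_num [Yt, height]
  unfold outcome
  rw [hh, Yt]
  have h1 := hy B; rw [Yt] at h1
  simp only [playAux, h1, yAct, yOut]
  split_ifs with h hb hb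
  · exact absurd (show (1:ℝ) - B ≤ 0 from hb) (by push_neg; linarith)
  · norm_num [playAux, List.getD]
  · norm_num [playAux, List.getD]
  · exact absurd (le_refl (1 - B)) hb

lemma playAux_leaf (γ : Profile) (n : ℕ) (a b B : ℝ) :
    playAux γ n (.leaf a b) B = (a, b) := by cases n <;> simp [playAux]

lemma oX (γ : Profile) (hx : ∀ B, γ Xt B = xAct B) (hy : ∀ B, γ Yt B = yAct B) (B : ℝ) :
    outcome γ Xt B = xOut B := by
  have hYo : ∀ B', playAux γ 1 (.node [.leaf 1 9, .leaf 9 1]) B' = yOut B' := by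
    intro B'
    have h := oY γ hy B'
    unfold outcome at h
    rw [show height Yt = 1 by norm_num [Yt, height], Yt] at h
    exact h
  have h1 := hx B; rw [Xt] at h1
  have hh : height Xt = 2 := by norm_num [Xt, Yt, height]
  unfold outcome
  rw [hh, Xt]
  simp only [playAux]
  rcases lt_or_ge B (1/4) with h | h
  · have hx2 : γ (.node [.leaf 5 5, Yt]) B = (0, 1/4, 0, 1) := by
      rw [h1]; unfold xAct; rw [if_pos h]
    rw [hx2]
    norm_num [List.getD, Yt, hYo, yOut, xOut, playAux_leaf]
    split_ifs <;> first | rfl | linarith | (exfalso; linarith)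
  rcases lt_or_ge B (1/2) with h2 | h2
  · have hx2 : γ (.node [.leaf 5 5, Yt]) B = (1/2 - B, 1 - B, 0, 0) := by
      rw [h1]; unfold xAct; rw [if_neg (not_lt.2 h), if_pos h2]
    rw [hx2]
    norm_num [List.getD, Yt, hYo, yOut, xOut, playAux_leaf]
    split_ifs <;> first | rfl | linarith | (exfalso; linarith)
  rcases lt_or_ge B (3/4) with h3 | h3
  · have hx2 : γ (.node [.leaf 5 5, Yt]) B = (1 - B, 1 - B, 0, 0) := by
      rw [h1]; unfold xAct; rw [if_neg (not_lt.2 h), if_neg (not_lt.2 h2), if_pos h3]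
    rw [hx2]
    norm_num [List.getD, Yt, hYo, yOut, xOut, playAux_leaf]
    split_ifs <;> first | rfl | linarith | (exfalso; linarith)
  · have hx2 : γ (.node [.leaf 5 5, Yt]) B = (1 - B, 1 - B, 1, 0) := by
      rw [h1]; unfold xAct; rw [if_neg (not_lt.2 h), if_neg (not_lt.2 h2), if_neg (not_lt.2 h3)]
    rw [hx2]
    norm_num [List.getD, Yt, hYo, yOut, xOut, playAux_leaf]
    split_ifs <;> first | rfl | linarith | (exfalso; linarith)

set_option linter.unreachableTactic false
set_option linter.unusedTactic false
set_option maxHeartbeats 1000000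

lemma check_Y (γ : Profile) (hy : ∀ B, γ Yt B = yAct B) (B : ℝ) (hB0 : 0 ≤ B) (hB1 : B ≤ 1) :
    validAct [.leaf 1 9, .leaf 9 1] B (γ (.node [.leaf 1 9, .leaf 9 1]) B) ∧
    eqAct γ [.leaf 1 9, .leaf 9 1] B (γ (.node [.leaf 1 9, .leaf 9 1]) B) := by
  have h1 : γ (.node [.leaf 1 9, .leaf 9 1]) B = yAct B := hy B
  rw [h1]
  unfold yAct
  rcases lt_or_ge B (1/2) with h | h
  · rw [if_pos h]
    constructor
    · unfold validAct
      norm_num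
      repeat' apply And.intro
      all_goals linarith
    · unfold eqAct
      norm_num [List.getD, outcome_leaf]
      rw [if_neg (show ¬(1:ℝ) ≤ B by linarith)]
      intro b1' _ hb1'
      linarith
  · rw [if_neg (not_lt.2 h)]
    constructor
    · unfold validAct
      norm_num
      repeat' apply And.intro
      all_goals linarith
    · unfold eqAct
      norm_num [List.getD, outcome_leaf]

lemma yOut_fst (B : ℝ) : (yOut B).1 = if B < 1/2 then 1 else 9 := by
  unfold yOut; split_ifs <;> rfl

lemma yOut_snd (B : ℝ) : (yOut B).2 = if B < 1/2 then 9 else 1 := by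
  unfold yOut; split_ifs <;> rfl

lemma check_X (γ : Profile) (hy : ∀ B, γ Yt B = yAct B) (hx : ∀ B, γ Xt B = xAct B)
    (B : ℝ) (hB0 : 0 ≤ B) (hB1 : B ≤ 1) :
    validAct [.leaf 5 5, Yt] B (γ (.node [.leaf 5 5, Yt]) B) ∧
    eqAct γ [.leaf 5 5, Yt] B (γ (.node [.leaf 5 5, Yt]) B) := by
  have hYo := oY γ hy
  have h1 : γ (.node [.leaf 5 5, Yt]) B = xAct B := hx B
  rw [h1]
  unfold xAct
  rcases lt_or_ge B (1/4) with h | h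
  · rw [if_pos h]
    constructor
    · unfold validAct
      norm_num [Yt]
      repeat' apply And.intro
      all_goals linarith
    · unfold eqAct
      norm_num [List.getD, outcome_leaf, hYo]
      simp only [yOut_fst, yOut_snd]
      repeat' first
        | apply And.intro
        | intro _
        | split_ifs
      all_goals linarith
  rcases lt_or_ge B (1/2) with h2 | h2
  · rw [if_neg (not_lt.2 h), if_pos h2]
    constructor
    · unfold validAct
      norm_num [Yt]
      repeat' apply And.intro
      all_goals linarith
    · unfold eqAct
      norm_num [List.getD, outcome_leaf, hYo]
      simp only [yOut_fst, yOut_snd]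
      repeat' first
        | apply And.intro
        | intro _
        | split_ifs
      all_goals linarith
  rcases lt_or_ge B (3/4) with h3 | h3
  · rw [if_neg (not_lt.2 h), if_neg (not_lt.2 h2), if_pos h3]
    constructor
    · unfold validAct
      norm_num [Yt]
      repeat' apply And.intro
      all_goals linarith
    · unfold eqAct
      norm_num [List.getD, outcome_leaf, hYo]
      simp only [yOut_fst, yOut_snd]
      repeat' first
        | apply And.intro
        | intro _
        | split_ifs
      all_goals linarith
  · rw [if_neg (not_lt.2 h), if_neg (not_lt.2 h2), if_neg (not_lt.2 h3)]
    constructor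
    · unfold validAct
      norm_num [Yt]
      repeat' apply And.intro
      all_goals linarith
    · unfold eqAct
      norm_num [List.getD, outcome_leaf, hYo]
      simp only [yOut_fst, yOut_snd]
      repeat' first
        | apply And.intro
        | intro _
        | split_ifs
      all_goals linarith

lemma xOut_fst (B : ℝ) : (xOut B).1 = if B < 1/4 then 1 else if B < 3/4 then 5 else 9 := by
  unfold xOut; split_ifs <;> rfl

lemma xOut_snd (B : ℝ) : (xOut B).2 = if B < 1/4 then 9 else if B < 3/4 then 5 else 1 := by
  unfold xOut; split_ifs <;> rfl

lemma check_root (γ : Profile) (hy : ∀ B, γ Yt B = yAct B) (hx : ∀ B, γ Xt B = xAct B)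
    (B : ℝ) (hB0 : 0 ≤ B) (hB1 : B ≤ 1) :
    validAct [.leaf 2 2, Xt] B (rAct B) ∧ eqAct γ [.leaf 2 2, Xt] B (rAct B) := by
  have hXo := oX γ hx hy
  unfold rAct
  rcases lt_or_ge B (1/8) with h | h
  · rw [if_pos h]
    constructor
    · unfold validAct
      norm_num [Xt, Yt]
      repeat' apply And.intro
      all_goals linarith
    · unfold eqAct
      norm_num [List.getD, outcome_leaf, hXo]
      simp only [xOut_fst, xOut_snd]
      repeat' first
        | apply And.intro
        | intro _
        | split_ifs
      all_goals linarith
  rcases lt_or_ge B (1/4) with h2 | h2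
  · rw [if_neg (not_lt.2 h), if_pos h2]
    constructor
    · unfold validAct
      norm_num [Xt, Yt]
      repeat' apply And.intro
      all_goals linarith
    · unfold eqAct
      norm_num [List.getD, outcome_leaf, hXo]
      simp only [xOut_fst, xOut_snd]
      repeat' first
        | apply And.intro
        | intro _
        | split_ifs
      all_goals linarith
  rcases lt_or_ge B (5/8) with h3 | h3
  · rw [if_neg (not_lt.2 h), if_neg (not_lt.2 h2), if_pos h3]
    constructor
    · unfold validAct
      norm_num [Xt, Yt]
      repeat' apply And.intro
      all_goals linarith
    · unfold eqAct
      norm_num [List.getD, outcome_leaf, hXo]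
      simp only [xOut_fst, xOut_snd]
      repeat' first
        | apply And.intro
        | intro _
        | split_ifs
      all_goals linarith
  · rw [if_neg (not_lt.2 h), if_neg (not_lt.2 h2), if_neg (not_lt.2 h3)]
    constructor
    · unfold validAct
      norm_num [Xt, Yt]
      repeat' apply And.intro
      all_goals linarith
    · unfold eqAct
      norm_num [List.getD, outcome_leaf, hXo]
      simp only [xOut_fst, xOut_snd]
      repeat' first
        | apply And.intro
        | intro _
        | split_ifs
      all_goals linarith

lemma check_root' (γ : Profile) (hy : ∀ B, γ Yt B = yAct B) (hx : ∀ B, γ Xt B = xAct B) :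
    validAct [.leaf 2 2, Xt] (1/2) ((1/2 : ℝ), (1/2 : ℝ), (0 : ℕ), (0 : ℕ)) ∧
    eqAct γ [.leaf 2 2, Xt] (1/2) ((1/2 : ℝ), (1/2 : ℝ), (0 : ℕ), (0 : ℕ)) := by
  have hXo := oX γ hx hy
  constructor
  · unfold validAct
    norm_num [Xt, Yt]
  · unfold eqAct
    norm_num [List.getD, outcome_leaf, hXo]
    simp only [xOut_fst, xOut_snd]
    repeat' first
      | apply And.intro
      | intro _
      | split_ifs
    all_goals linarith

lemma pspe_gam : IsPSPE gam Gtwo := by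
  intro cs hsub B hB0 hB1
  rcases subtree_enum hsub with rfl | rfl | rfl
  · exact check_root gam gam_Y gam_X B hB0 hB1
  · exact check_X gam gam_Y gam_X B hB0 hB1
  · exact check_Y gam gam_Y B hB0 hB1

lemma gam'_node_root (B : ℝ) :
    gam' (.node [.leaf 2 2, Xt]) B = if B = 1/2 then ((1/2 : ℝ), (1/2 : ℝ), (0 : ℕ), (0 : ℕ)) else rAct B := rfl

lemma pspe_gam' : IsPSPE gam' Gtwo := by
  intro cs hsub B hB0 hB1
  rcases subtree_enum hsub with rfl | rfl | rfl
  · by_cases hB : B = 1/2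
    · subst hB
      have h : gam' (.node [.leaf 2 2, Xt]) (1/2) = ((1/2 : ℝ), (1/2 : ℝ), (0 : ℕ), (0 : ℕ)) := by
        rw [gam'_node_root, if_pos rfl]
      rw [h]
      exact check_root' gam' gam'_Y gam'_X
    · have h : gam' (.node [.leaf 2 2, Xt]) B = rAct B := by
        rw [gam'_node_root, if_neg hB]
      rw [h]
      exact check_root gam' gam'_Y gam'_X B hB0 hB1
  · exact check_X gam' gam'_Y gam'_X B hB0 hB1
  · exact check_Y gam' gam'_Y B hB0 hB1

lemma playAux_X (γ : Profile) (hx : ∀ B, γ Xt B = xAct B) (hy : ∀ B, γ Yt B = yAct B) (B : ℝ) :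
    playAux γ 2 (.node [.leaf 5 5, .node [.leaf 1 9, .leaf 9 1]]) B = xOut B := by
  have h := oX γ hx hy B
  unfold outcome at h
  rw [show height Xt = 2 by norm_num [Xt, Yt, height], Xt, Yt] at h
  exact h

theorem stmt19' :
    ∃ γ γ' : Profile,
      IsPSPE γ Gtwo ∧ IsPSPE γ' Gtwo ∧
      (γ Gtwo (1 / 2)).1 = 0 ∧ (γ Gtwo (1 / 2)).2.1 = 0 ∧
      outcome γ Gtwo (1 / 2) = (5, 5) ∧
      (γ' Gtwo (1 / 2)).1 = 1 / 2 ∧ (γ' Gtwo (1 / 2)).2.1 = 1 / 2 ∧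
      outcome γ' Gtwo (1 / 2) = (2, 2) := by
  have hgr : gam Gtwo (1/2) = ((0:ℝ), (0:ℝ), (1:ℕ), (1:ℕ)) := by
    rw [gam_root]; unfold rAct; norm_num
  have hgr' : gam' Gtwo (1/2) = ((1/2:ℝ), (1/2:ℝ), (0:ℕ), (0:ℕ)) := by
    rw [gam'_root, if_pos rfl]
  have hh : height Gtwo = 3 := by norm_num [Gtwo, height]
  refine ⟨gam, gam', pspe_gam, pspe_gam', ?_, ?_, ?_, ?_, ?_, ?_⟩
  · rw [hgr]
  · rw [hgr]
  · unfold outcome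
    rw [hh, show Gtwo = .node [.leaf 2 2, .node [.leaf 5 5, .node [.leaf 1 9, .leaf 9 1]]] from rfl]
    simp only [playAux]
    rw [show gam (.node [.leaf 2 2, .node [.leaf 5 5, .node [.leaf 1 9, .leaf 9 1]]]) (1/2)
        = ((0:ℝ), (0:ℝ), (1:ℕ), (1:ℕ)) from hgr]
    norm_num [List.getD, playAux_X gam gam_X gam_Y, xOut]
  · rw [hgr']
  · rw [hgr']
  · unfold outcome
    rw [hh, show Gtwo = .node [.leaf 2 2, .node [.leaf 5 5, .node [.leaf 1 9, .leaf 9 1]]] from rfl]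
    simp only [playAux]
    rw [show gam' (.node [.leaf 2 2, .node [.leaf 5 5, .node [.leaf 1 9, .leaf 9 1]]]) (1/2)
        = ((1/2:ℝ), (1/2:ℝ), (0:ℕ), (0:ℕ)) from hgr']
    norm_num [List.getD, playAux_leaf]

/-- The generic binary bidding game `G_two`, with equal initial
budgets `(1/2, 1/2)`, admits two pure subgame-perfect equilibria with different
outcomes: one with root bids `(0, 0)` leading to the leaf with payoffs `(5,5)`,
and one with root bids `(1/2, 1/2)` leading to the leaf with payoffs `(2,2)`. -/
theorem stmt19 :
    ∃ γ γ' : Profile,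
      IsPSPE γ Gtwo ∧ IsPSPE γ' Gtwo ∧
      (γ Gtwo (1 / 2)).1 = 0 ∧ (γ Gtwo (1 / 2)).2.1 = 0 ∧
      outcome γ Gtwo (1 / 2) = (5, 5) ∧
      (γ' Gtwo (1 / 2)).1 = 1 / 2 ∧ (γ' Gtwo (1 / 2)).2.1 = 1 / 2 ∧
      outcome γ' Gtwo (1 / 2) = (2, 2) := by
  exact stmt19'
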